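/- Let c ∈ ℝ, r > 0, ε > 0, and w, w′ ∈ [c−r, c+r]. Let G ≥ r·α(ε) and let (X, Y) be any jointly distributed pair of random variables taking values in {c−G, c+G} such that E[X] = w and E[Y] = w′. Then E[(X + Y − w − w′)²] ≥ 2r·α(ε)·|w + w′ − 2c| − (w + w′ − 2c)². -/
import Mathlib


open Real Set

/-- `α(ε) = (e^ε + 1)/(e^ε − 1)`. -/
noncomputable def alphaFn (ε : ℝ) : ℝ := (Real.exp ε + 1) / (Real.exp ε - 1)

/-- let `G ≥ r·α(ε)` and let `(X, Y)` be any jointly distributed pair of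
`{c−G, c+G}`-valued random variables (joint pmf `P : Bool → Bool → ℝ`, `true ↦ c+G`,
`false ↦ c−G`) with `E[X] = w` and `E[Y] = w'`, where `w, w' ∈ [c−r, c+r]`.  Then
`E[(X + Y − w − w')²] ≥ 2rα(ε)·|w + w' − 2c| − (w + w' − 2c)²`. -/
theorem stmt9 (c r ε G : ℝ) (hr : 0 < r) (hε : 0 < ε)
    (hG : r * alphaFn ε ≤ G)
    (w w' : ℝ) (hw : w ∈ Icc (c - r) (c + r)) (hw' : w' ∈ Icc (c - r) (c + r))
    (P : Bool → Bool → ℝ)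
    (hnn : ∀ b b' : Bool, 0 ≤ P b b')
    (hsum : (∑ b : Bool, ∑ b' : Bool, P b b') = 1)
    (hEX : (∑ b : Bool, ∑ b' : Bool, P b b' * (if b then c + G else c - G)) = w)
    (hEY : (∑ b : Bool, ∑ b' : Bool, P b b' * (if b' then c + G else c - G)) = w') :
    2 * r * alphaFn ε * |w + w' - 2 * c| - (w + w' - 2 * c) ^ 2 ≤
      ∑ b : Bool, ∑ b' : Bool, P b b' *
        ((if b then c + G else c - G) + (if b' then c + G else c - G) - w - w') ^ 2 := by
  have hA : 0 < alphaFn ε := by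
    have h1 : 1 < Real.exp ε := by
      rw [show (1:ℝ) = Real.exp 0 by simp]; exact Real.exp_lt_exp.mpr hε
    exact div_pos (by linarith) (by linarith)
  have hG0 : 0 < G := lt_of_lt_of_le (mul_pos hr hA) hG
  have h00 := hnn false false
  have h01 := hnn false true
  have h10 := hnn true false
  have h11 := hnn true true
  simp only [Fintype.sum_bool, Bool.false_eq_true, if_true, if_false] at hsum hEX hEY ⊢
  have ht : 2 * G * (P true true - P false false) = w + w' - 2 * c := by linear_combination hEX + hEY - 2 * c * hsum
  have hrA : 0 < r * alphaFn ε := mul_pos hr hA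
  rcases abs_cases (w + w' - 2 * c) with ⟨habs, hs⟩ | ⟨habs, hs⟩ <;> rw [habs]
  · have hd : 0 ≤ P true true - P false false := by nlinarith
    nlinarith [mul_le_mul_of_nonneg_right hG (mul_nonneg hG0.le hd),
      mul_nonneg (mul_nonneg hG0.le hG0.le) h00]
  · have hd : 0 ≤ P false false - P true true := by nlinarith
    nlinarith [mul_le_mul_of_nonneg_right hG (mul_nonneg hG0.le hd),
      mul_nonneg (mul_nonneg hG0.le hG0.le) h11]
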